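/- arXiv:2112.09352 — 6 statements merged into one kernel-verified Lean document; each statement's English description precedes it below -/
import Mathlib

section
/- For every real number $a \in [0,1]$ and every integer $k \geq 2$, letting $q_k = \log_2(2^k+2)$, we have $(a^{q_k/k} + (1-a)^{q_k/k})^k + 2 a^{q_k/2}(1-a)^{q_k/2} \leq 1$. -/
open Real

/-!
Write `b = 1 - a`, `v = a b ∈ [0, 1/4]`, `r = q - k ∈ (0, 1)` and `s = q / 2`. Since
`p = q / k ∈ [1, 2]`, weighted AM-GM interpolates `a ^ p + b ^ p` between `a + b = 1` and
`a ^ 2 + b ^ 2 = 1 - 2 v`, giving `(a ^ p + b ^ p) ^ k ≤ (1 - 2 v) ^ r`. It remains to show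
`(1 - 2 v) ^ r + 2 v ^ s ≤ 1`. This is an equality at `v = 1/4` because `2 ^ q = 2 ^ k + 2`, and
`(1 - (1 - 2 v) ^ r) / v ^ s` is decreasing on `(0, 1/4]`: with `u = 1 - 2 v`, the sign of its
derivative is that of `r u ^ (r - 1) (1 - u) - s (1 - u ^ r)`, which is controlled by the chord of
the concave `y ↦ y ^ r` over `[1, 2]` at `y = 1 / u`, together with `r ≤ s (2 ^ r - 1)`.
-/

lemma rpow_div_rpow_sub_one_le {x T p : ℝ} (hx : 0 ≤ x) (hT : 0 < T) (hp1 : 1 ≤ p)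
    (hp2 : p ≤ 2) : x ^ p / T ^ (p - 1) ≤ (2 - p) * x + (p - 1) * (x ^ 2 / T) := by
  have hsplit : x ^ p / T ^ (p - 1) = x ^ (2 - p) * (x ^ 2 / T) ^ (p - 1) := by
    rw [div_rpow (by positivity) hT.le, ← rpow_natCast x 2, ← rpow_mul hx, ← mul_div_assoc,
      ← rpow_add' hx (by push_cast; linarith)]
    push_cast; ring_nf
  rw [hsplit]
  exact geom_mean_le_arith_mean2_weighted (by linarith) (by linarith) hx (by positivity) (by ring)

theorem rpow_add_rpow_le_sq_add_sq_rpow {a b p : ℝ} (ha : 0 ≤ a) (hb : 0 ≤ b) (hab : a + b = 1)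
    (hp1 : 1 ≤ p) (hp2 : p ≤ 2) : a ^ p + b ^ p ≤ (a ^ 2 + b ^ 2) ^ (p - 1) := by
  have hT : 0 < a ^ 2 + b ^ 2 := by nlinarith [sq_nonneg (a - b)]
  have hsum := add_le_add (rpow_div_rpow_sub_one_le ha hT hp1 hp2)
    (rpow_div_rpow_sub_one_le hb hT hp1 hp2)
  rw [← add_div, div_le_iff₀ (rpow_pos_of_pos hT _)] at hsum
  have hweights : (2 - p) * a + (p - 1) * (a ^ 2 / (a ^ 2 + b ^ 2))
      + ((2 - p) * b + (p - 1) * (b ^ 2 / (a ^ 2 + b ^ 2))) = 1 := by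
    field_simp; linear_combination (2 - p) * (a ^ 2 + b ^ 2) * hab
  rwa [hweights, one_mul] at hsum

theorem rpow_add_rpow_pow_le {a b q : ℝ} {k : ℕ} (ha : 0 ≤ a) (hb : 0 ≤ b) (hab : a + b = 1)
    (hk : 0 < k) (hkq : k ≤ q) (hqk : q ≤ 2 * k) :
    (a ^ (q / k) + b ^ (q / k)) ^ k ≤ (a ^ 2 + b ^ 2) ^ (q - k) := by
  have hk0 : (0 : ℝ) < k := by exact_mod_cast hk
  calc (a ^ (q / k) + b ^ (q / k)) ^ k ≤ ((a ^ 2 + b ^ 2) ^ (q / k - 1)) ^ k :=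
        pow_le_pow_left₀ (by positivity) (rpow_add_rpow_le_sq_add_sq_rpow ha hb hab
          ((one_le_div hk0).2 hkq) ((div_le_iff₀ hk0).2 hqk)) k
    _ = (a ^ 2 + b ^ 2) ^ (q - k) := by
        rw [← rpow_mul_natCast (by positivity)]; congr 1; field_simp

section

variable {r s : ℝ}

lemma one_add_two_rpow_sub_one_mul_le_rpow (hr0 : 0 ≤ r) (hr1 : r ≤ 1) {y : ℝ} (hy1 : 1 ≤ y)
    (hy2 : y ≤ 2) : 1 + (2 ^ r - 1) * (y - 1) ≤ y ^ r := by
  have h := (concaveOn_rpow hr0 hr1).2 (Set.mem_Ici.2 zero_le_one) (Set.mem_Ici.2 zero_le_two)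
    (by linarith : 0 ≤ 2 - y) (by linarith : 0 ≤ y - 1) (by ring)
  simp only [smul_eq_mul, one_rpow] at h
  calc 1 + (2 ^ r - 1) * (y - 1) = (2 - y) * 1 + (y - 1) * 2 ^ r := by ring
    _ ≤ ((2 - y) * 1 + (y - 1) * 2) ^ r := h
    _ = y ^ r := by ring_nf

lemma two_rpow_sub_one_mul_le_one_sub_rpow (hr0 : 0 ≤ r) (hr1 : r ≤ 1) {u : ℝ} (hu1 : 1 / 2 ≤ u)
    (hu2 : u ≤ 1) : (2 ^ r - 1) * (u ^ (r - 1) * (1 - u)) ≤ 1 - u ^ r := by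
  have hu0 : 0 < u := by linarith
  have hchord := one_add_two_rpow_sub_one_mul_le_rpow hr0 hr1 (y := u⁻¹)
    ((one_le_inv₀ hu0).2 hu2) (inv_le_of_inv_le₀ two_pos (by linarith))
  have hur : 0 < u ^ r := rpow_pos_of_pos hu0 r
  have hscaled := mul_le_mul_of_nonneg_left hchord hur.le
  rw [inv_rpow hu0.le, mul_inv_cancel₀ hur.ne'] at hscaled
  have hsplit : u ^ (r - 1) * (1 - u) = u ^ r * (u⁻¹ - 1) := by
    rw [rpow_sub_one hu0.ne']; field_simp
  rw [hsplit]
  linear_combination hscaled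

lemma hasDerivAt_one_sub_rpow_div_rpow {v : ℝ} (hv0 : 0 < v) (hv : v < 1 / 2) :
    HasDerivAt (fun v => (1 - (1 - 2 * v) ^ r) / v ^ s)
      ((2 * r * (1 - 2 * v) ^ (r - 1) * v ^ s - (1 - (1 - 2 * v) ^ r) * (s * v ^ (s - 1)))
        / (v ^ s) ^ 2) v := by
  have hinner : HasDerivAt (fun v : ℝ => 1 - 2 * v) (-2) v := by
    simpa using ((hasDerivAt_id v).const_mul 2).const_sub 1
  have hnum := (hinner.rpow_const (p := r) (Or.inl (by linarith))).const_sub 1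
  exact (hnum.fun_div (hasDerivAt_rpow_const (Or.inl hv0.ne'))
    (rpow_pos_of_pos hv0 s).ne').congr_deriv (by ring)

lemma mul_rpow_sub_one_mul_le_mul_one_sub_rpow (hr0 : 0 ≤ r) (hr1 : r ≤ 1) (hs : 0 ≤ s)
    (hrs : r ≤ s * ((2 : ℝ) ^ r - 1)) {u : ℝ} (hu1 : 1 / 2 ≤ u) (hu2 : u ≤ 1) :
    r * (u ^ (r - 1) * (1 - u)) ≤ s * (1 - u ^ r) :=
  calc r * (u ^ (r - 1) * (1 - u)) ≤ s * (2 ^ r - 1) * (u ^ (r - 1) * (1 - u)) :=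
        mul_le_mul_of_nonneg_right hrs
          (mul_nonneg (rpow_nonneg (by linarith) _) (by linarith))
    _ ≤ s * (1 - u ^ r) := by
        rw [mul_assoc]
        exact mul_le_mul_of_nonneg_left (two_rpow_sub_one_mul_le_one_sub_rpow hr0 hr1 hu1 hu2) hs

lemma antitoneOn_one_sub_rpow_div_rpow (hr0 : 0 ≤ r) (hr1 : r ≤ 1) (hs : 0 ≤ s)
    (hrs : r ≤ s * ((2 : ℝ) ^ r - 1)) :
    AntitoneOn (fun v => (1 - (1 - 2 * v) ^ r) / v ^ s) (Set.Ioc (0 : ℝ) (1 / 4)) := by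
  have hderiv (v : ℝ) (hv : v ∈ Set.Ioc (0 : ℝ) (1 / 4)) :=
    hasDerivAt_one_sub_rpow_div_rpow (r := r) (s := s) hv.1 (by linarith [hv.2])
  apply antitoneOn_of_deriv_nonpos (convex_Ioc 0 (1 / 4))
  · exact fun v hv => (hderiv v hv).continuousAt.continuousWithinAt
  · rw [interior_Ioc]
    exact fun v hv =>
      (hderiv v (Set.Ioo_subset_Ioc_self hv)).differentiableAt.differentiableWithinAt
  · rw [interior_Ioc]
    intro v hv
    rw [(hderiv v (Set.Ioo_subset_Ioc_self hv)).deriv]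
    refine div_nonpos_of_nonpos_of_nonneg ?_ (sq_nonneg _)
    have hslope := mul_rpow_sub_one_mul_le_mul_one_sub_rpow hr0 hr1 hs hrs (u := 1 - 2 * v)
      (by linarith [hv.2]) (by linarith [hv.1])
    have hnum : 2 * r * (1 - 2 * v) ^ (r - 1) * v ^ s - (1 - (1 - 2 * v) ^ r) * (s * v ^ (s - 1))
        = v ^ (s - 1) * (r * ((1 - 2 * v) ^ (r - 1) * (1 - (1 - 2 * v)))
          - s * (1 - (1 - 2 * v) ^ r)) := by
      have hvs : v ^ s = v ^ (s - 1) * v := by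
        rw [rpow_sub_one hv.1.ne', div_mul_cancel₀ _ hv.1.ne']
      rw [hvs]; ring
    rw [hnum]
    exact mul_nonpos_of_nonneg_of_nonpos (rpow_nonneg hv.1.le _) (sub_nonpos.2 hslope)

theorem one_sub_two_mul_rpow_add_two_mul_rpow_le_one (hr0 : 0 ≤ r) (hr1 : r ≤ 1) (hs : 0 < s)
    (hrs : r ≤ s * ((2 : ℝ) ^ r - 1)) (hquarter : (1 / 2 : ℝ) ^ r + 2 * (1 / 4) ^ s ≤ 1) {v : ℝ}
    (hv0 : 0 ≤ v) (hv : v ≤ 1 / 4) : (1 - 2 * v) ^ r + 2 * v ^ s ≤ 1 := by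
  rcases hv0.eq_or_lt with rfl | hv0
  · simp [zero_rpow hs.ne']
  have hanti := antitoneOn_one_sub_rpow_div_rpow hr0 hr1 hs.le hrs ⟨hv0, hv⟩
    ⟨by norm_num, le_rfl⟩ hv
  have hend : 2 ≤ (1 - (1 - 2 * (1 / 4 : ℝ)) ^ r) / (1 / 4) ^ s := by
    rw [le_div_iff₀ (by positivity)]; norm_num; linarith
  have := hend.trans hanti
  rw [le_div_iff₀ (rpow_pos_of_pos hv0 s)] at this
  linarith

end

section

variable {k : ℕ} {q : ℝ}

lemma two_rpow_sub_natCast_eq (hq : (2 : ℝ) ^ q = 2 ^ k + 2) :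
    (2 : ℝ) ^ (q - k) = 1 + 2 / 2 ^ k := by
  rw [rpow_sub two_pos, hq, rpow_natCast]; field_simp

lemma natCast_lt_of_two_rpow_eq (hq : (2 : ℝ) ^ q = 2 ^ k + 2) : (k : ℝ) < q := by
  rw [← rpow_lt_rpow_left_iff one_lt_two, hq, rpow_natCast]; linarith

lemma lt_natCast_add_one_of_two_rpow_eq (hk : 2 ≤ k) (hq : (2 : ℝ) ^ q = 2 ^ k + 2) :
    q < k + 1 := by
  have h4 : (2 : ℝ) ^ 2 ≤ 2 ^ k := pow_le_pow_right₀ one_le_two hk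
  rw [← rpow_lt_rpow_left_iff one_lt_two, hq, ← Nat.cast_succ, rpow_natCast, pow_succ]
  linarith

lemma sub_natCast_le_half_mul_two_rpow_sub_one (hk : 2 ≤ k) (hq : (2 : ℝ) ^ q = 2 ^ k + 2) :
    q - k ≤ q / 2 * (2 ^ (q - k) - 1) := by
  rw [two_rpow_sub_natCast_eq hq, add_sub_cancel_left]
  rcases hk.eq_or_lt with rfl | hk3
  · -- `2 ^ (3 q) = 6 ^ 3 ≤ 2 ^ 8`
    have : 3 * q ≤ 8 := by
      rw [← rpow_le_rpow_left_iff one_lt_two, mul_comm, rpow_mul zero_le_two, hq]; norm_num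
    norm_num; linarith
  · -- `(q - k) log 2 ≤ 2 ^ (q - k) - 1`, `log 2 > 2 / 3` and `q / 2 > 3 / 2`
    have hexp : (q - k) * log 2 ≤ 2 / 2 ^ k := by
      have := add_one_le_exp (log 2 * (q - k))
      rw [← rpow_def_of_pos two_pos, two_rpow_sub_natCast_eq hq] at this
      linarith
    have hk3 : (3 : ℝ) ≤ k := by exact_mod_cast hk3
    have hqk := natCast_lt_of_two_rpow_eq hq
    have hE : (0 : ℝ) < 2 / 2 ^ k := by positivity
    nlinarith [log_two_gt_d9]

lemma half_rpow_add_two_mul_quarter_rpow_eq_one (hq : (2 : ℝ) ^ q = 2 ^ k + 2) :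
    (1 / 2 : ℝ) ^ (q - k) + 2 * (1 / 4) ^ (q / 2) = 1 := by
  have hquarter : (1 / 4 : ℝ) ^ (q / 2) = 1 / 2 ^ q := by
    rw [show (1 / 4 : ℝ) = (1 / 2) ^ (2 : ℝ) by norm_num, ← rpow_mul (by norm_num),
      div_rpow zero_le_one zero_le_two, one_rpow]
    ring_nf
  rw [hquarter, div_rpow zero_le_one zero_le_two, one_rpow, two_rpow_sub_natCast_eq hq, hq]
  field_simp

end

theorem higher_energy_key_ineq (k : ℕ) (hk : 2 ≤ k) (a : ℝ) (ha : a ∈ Set.Icc (0:ℝ) 1) :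
    (a ^ (Real.logb 2 (2^k + 2) / k) + (1 - a) ^ (Real.logb 2 (2^k + 2) / k)) ^ k
      + 2 * a ^ (Real.logb 2 (2^k + 2) / 2) * (1 - a) ^ (Real.logb 2 (2^k + 2) / 2) ≤ 1 := by
  obtain ⟨ha0, ha1⟩ := ha
  have hb0 : 0 ≤ 1 - a := sub_nonneg.2 ha1
  set q := logb 2 (2 ^ k + 2)
  have hq : (2 : ℝ) ^ q = 2 ^ k + 2 := rpow_logb two_pos (by norm_num) (by positivity)
  have hkq := natCast_lt_of_two_rpow_eq hq
  have hqk := lt_natCast_add_one_of_two_rpow_eq hk hq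
  have hk1 : (1 : ℝ) ≤ k := by exact_mod_cast (by omega : 1 ≤ k)
  have hholder := rpow_add_rpow_pow_le ha0 hb0 (add_sub_cancel a 1) (by omega) hkq.le
    (by linarith)
  have hone_var := one_sub_two_mul_rpow_add_two_mul_rpow_le_one (by linarith) (by linarith)
    (by linarith) (sub_natCast_le_half_mul_two_rpow_sub_one hk hq)
    (half_rpow_add_two_mul_quarter_rpow_eq_one hq).le (mul_nonneg ha0 hb0)
    (by nlinarith [sq_nonneg (2 * a - 1)])
  rw [mul_assoc, ← mul_rpow ha0 hb0]
  rw [show a ^ 2 + (1 - a) ^ 2 = 1 - 2 * (a * (1 - a)) by ring] at hholder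
  linarith
end

section
/- For all nonnegative reals $x, y$ and every integer $k \geq 2$, with $q_k = \log_2(2^k+2)$, we have $2 x^{q_k/2} y^{q_k/2} + (x^{q_k/k} + y^{q_k/k})^k \leq (x+y)^{q_k}$. -/
/-!
Put `q = q_k` and `μ = q - k ∈ (0, 1]`. Weighted Hölder with weights `x, y` gives
`(x^(q/k) + y^(q/k))^k ≤ (x + y)^(2k - q) (x² + y²)^μ`. After this the inequality is homogeneous
of degree `q`; dividing by `(x + y)^q` and writing `b = 2 (x² + y²) / (x + y)² ∈ [1, 2]` it becomes
`(2^μ - 1) (2 - b)^(q/2) + b^μ ≤ 2^μ`, with equality at both ends `b = 1, 2`. The derivative of the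
left side is `≤ 0` exactly where the log-concave function `(2 - b)^(q/2 - 1) b^(1 - μ)` is above a
fixed level, i.e. on an interval; it contains `b = 1` because `μ ≤ (2^μ - 1) q / 2`, which for
`2^μ = 1 + 2^(1-k)` reads `(q - k) 2^k ≤ q`. So the left side decreases and then increases on
`[1, 2]`, and is bounded by its values at the ends.
-/

open Real Set

theorem concaveOn_mul_log_sub_add_mul_log {a c d : ℝ} (ha : 0 ≤ a) (hc : 0 ≤ c) :
    ConcaveOn ℝ (Ioo 0 d) (fun b => a * log (d - b) + c * log b) := by
  have hlog := strictConcaveOn_log_Ioi.concaveOn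
  have hrefl : ConcaveOn ℝ (Iio d) (fun b => log (d - b)) := by
    have := hlog.comp_affineMap (AffineMap.const ℝ ℝ d - AffineMap.id ℝ ℝ)
    have hpre : (AffineMap.const ℝ ℝ d - AffineMap.id ℝ ℝ) ⁻¹' Ioi 0 = Iio d := by
      ext b; simp
    rwa [hpre] at this
  refine ((hrefl.subset ?_ (convex_Ioo 0 d)).smul ha).add
    ((hlog.subset ?_ (convex_Ioo 0 d)).smul hc)
  · exact fun b hb => hb.2
  · exact fun b hb => hb.1

theorem two_rpow_sub_one_mul_two_sub_rpow_add_rpow_le {μ p b : ℝ} (hμ0 : 0 < μ) (hμ1 : μ ≤ 1)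
    (hp : 1 ≤ p) (hμp : μ ≤ (2 ^ μ - 1) * p) (hb : b ∈ Icc 1 2) :
    (2 ^ μ - 1) * (2 - b) ^ p + b ^ μ ≤ 2 ^ μ := by
  set K : ℝ := 2 ^ μ - 1
  have hK : 0 < K := sub_pos.2 (one_lt_rpow one_lt_two hμ0)
  set G : ℝ → ℝ := fun t => K * (2 - t) ^ p + t ^ μ
  set G' : ℝ → ℝ := fun t => μ * t ^ (μ - 1) - K * p * (2 - t) ^ (p - 1)
  have hG1 : G 1 = 2 ^ μ := by norm_num [G, K]
  have hG2 : G 2 = 2 ^ μ := by simp [G, zero_rpow (by positivity : p ≠ 0)]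
  have hcont : Continuous G :=
    (continuous_const.mul ((continuous_const.sub continuous_id).rpow_const
      fun _ => Or.inr (by linarith))).add (continuous_id.rpow_const fun _ => Or.inr hμ0.le)
  have hderiv : ∀ t ∈ Ioo (0 : ℝ) 2, HasDerivAt G (G' t) t := by
    intro t ht
    have h2t : HasDerivAt (fun t : ℝ => (2 - t) ^ p) (-1 * p * (2 - t) ^ (p - 1)) t := by
      simpa using ((hasDerivAt_id t).const_sub 2).rpow_const (Or.inl (sub_pos.2 ht.2).ne')
    refine ((h2t.const_mul K).add (hasDerivAt_rpow_const (Or.inl ht.1.ne'))).congr_deriv ?_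
    ring
  -- `G' t ≤ 0` exactly where the concave function `φ` lies above a fixed level
  set φ : ℝ → ℝ := fun t => (p - 1) * log (2 - t) + (1 - μ) * log t
  have hsign : ∀ t ∈ Ioo (0 : ℝ) 2, G' t ≤ 0 ↔ log μ - log (K * p) ≤ φ t := by
    intro t ht
    have ht2 : 0 < 2 - t := by linarith [ht.2]
    simp only [G', φ, sub_nonpos]
    rw [← log_le_log_iff (by have := ht.1; positivity) (by positivity),
      log_mul hμ0.ne' (by have := ht.1; positivity), log_mul (by positivity) (by positivity),
      log_rpow ht.1, log_rpow ht2]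
    constructor <;> intro h <;> linarith
  have hconn : OrdConnected {t ∈ Ioo (0 : ℝ) 2 | G' t ≤ 0} := by
    have := ((concaveOn_mul_log_sub_add_mul_log (d := 2) (sub_nonneg.2 hp)
      (sub_nonneg.2 hμ1)).quasiconcaveOn (log μ - log (K * p))).ordConnected
    rwa [show {t ∈ Ioo (0 : ℝ) 2 | G' t ≤ 0} = {t ∈ Ioo (0 : ℝ) 2 | log μ - log (K * p) ≤ φ t}
      from Set.ext fun t => and_congr_right (hsign t)]
  have hG'1 : G' 1 ≤ 0 := by norm_num [G', K]; linarith
  by_cases hdec : ∀ t ∈ Ioo 1 b, G' t ≤ 0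
  · have hanti : AntitoneOn G (Icc 1 b) := by
      refine antitoneOn_of_hasDerivWithinAt_nonpos (convex_Icc 1 b) hcont.continuousOn
        (fun t ht => ?_) (fun t ht => hdec t (by rwa [interior_Icc] at ht))
      rw [interior_Icc] at ht ⊢
      exact (hderiv t ⟨by linarith [ht.1], by linarith [ht.2, hb.2]⟩).hasDerivWithinAt
    exact hG1 ▸ hanti ⟨le_rfl, hb.1⟩ ⟨hb.1, le_rfl⟩ hb.1
  · push Not at hdec
    obtain ⟨t₀, ht₀, hG't₀⟩ := hdec
    have hinc : ∀ t ∈ Ioo t₀ 2, 0 ≤ G' t := by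
      intro t ht
      by_contra! hneg
      have := hconn.out ⟨⟨one_pos, one_lt_two⟩, hG'1⟩
        ⟨⟨by linarith [ht.1, ht₀.1], ht.2⟩, hneg.le⟩ ⟨ht₀.1.le, ht.1.le⟩
      linarith [this.2]
    have hmono : MonotoneOn G (Icc t₀ 2) := by
      refine monotoneOn_of_hasDerivWithinAt_nonneg (convex_Icc t₀ 2) hcont.continuousOn
        (fun t ht => ?_) (fun t ht => hinc t (by rwa [interior_Icc] at ht))
      rw [interior_Icc] at ht ⊢
      exact (hderiv t ⟨by linarith [ht.1, ht₀.1], ht.2⟩).hasDerivWithinAt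
    exact hG2 ▸ hmono ⟨ht₀.2.le, hb.2⟩ ⟨by linarith [ht₀.2, hb.2], le_rfl⟩ hb.2

theorem rpow_div_add_rpow_div_pow_le {x y q : ℝ} {k : ℕ} (hx : 0 ≤ x) (hy : 0 ≤ y) (hkq : k < q)
    (hqk : q ≤ 2 * k) :
    (x ^ (q / k) + y ^ (q / k)) ^ k ≤ (x + y) ^ (2 * k - q) * (x ^ 2 + y ^ 2) ^ (q - k) := by
  have hk : (0 : ℝ) < k := by linarith
  have hμ : 0 < q - k := sub_pos.2 hkq
  have hholder := inner_le_weight_mul_Lp_of_nonneg Finset.univ (p := k / (q - k))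
    ((one_le_div hμ).2 (by linarith)) ![x, y] ![x ^ ((q - k) / k), y ^ ((q - k) / k)]
    (by simp [Fin.forall_fin_two, hx, hy]) (by simp [Fin.forall_fin_two, rpow_nonneg, hx, hy])
  have hterm : ∀ z : ℝ, 0 ≤ z → z * z ^ ((q - k) / k) = z ^ (q / k) := fun z hz => by
    rw [← rpow_one_add' hz (by positivity)]; congr 1; field_simp; ring
  have hsq : ∀ z : ℝ, 0 ≤ z → z * (z ^ ((q - k) / k)) ^ (k / (q - k)) = z ^ 2 := fun z hz => by
    rw [← rpow_mul hz, div_mul_div_comm, mul_comm (q - k), div_self (by positivity), rpow_one, sq]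
  simp only [Fin.sum_univ_two, Matrix.cons_val_zero, Matrix.cons_val_one, hterm x hx,
    hterm y hy, hsq x hx, hsq y hy, inv_div] at hholder
  have hpow : ∀ a r : ℝ, 0 ≤ a → (a ^ (r / k)) ^ k = a ^ r := fun a r ha => by
    rw [← rpow_natCast, ← rpow_mul ha, div_mul_cancel₀ _ hk.ne']
  calc (x ^ (q / k) + y ^ (q / k)) ^ k
      ≤ ((x + y) ^ (1 - (q - k) / k) * (x ^ 2 + y ^ 2) ^ ((q - k) / k)) ^ k := by
        gcongr
    _ = (x + y) ^ (2 * k - q) * (x ^ 2 + y ^ 2) ^ (q - k) := by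
        rw [mul_pow, show 1 - (q - k) / k = (2 * k - q) / k by field_simp; ring,
          hpow _ _ (by positivity), hpow _ _ (by positivity)]

theorem two_rpow_sub_one_mul_rpow_add_le {μ p x y : ℝ} (hx : 0 ≤ x) (hy : 0 ≤ y) (hμ0 : 0 < μ)
    (hμ1 : μ ≤ 1) (hp : 1 ≤ p) (hμp : μ ≤ (2 ^ μ - 1) * p) :
    (2 ^ μ - 1) * (4 * x * y) ^ p + (2 * (x ^ 2 + y ^ 2)) ^ μ * ((x + y) ^ 2) ^ (p - μ)
      ≤ 2 ^ μ * ((x + y) ^ 2) ^ p := by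
  rcases (add_nonneg hx hy).eq_or_lt with hxy | hxy
  · obtain ⟨rfl, rfl⟩ : x = 0 ∧ y = 0 := ⟨by linarith, by linarith⟩
    simp [zero_rpow (by positivity : p ≠ 0), zero_rpow hμ0.ne']
  set S := (x + y) ^ 2
  have hS : 0 < S := by positivity
  set b := 2 * (x ^ 2 + y ^ 2) / S
  have hb : b ∈ Icc 1 2 := by
    constructor
    · rw [le_div_iff₀ hS]; nlinarith [sq_nonneg (x - y)]
    · rw [div_le_iff₀ hS]; nlinarith [mul_nonneg hx hy]
  have hsq : 2 * (x ^ 2 + y ^ 2) = S * b := (mul_div_cancel₀ _ hS.ne').symm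
  have hxy4 : 4 * x * y = S * (2 - b) := by simp only [b, S]; field_simp; ring
  have hb1 := two_rpow_sub_one_mul_two_sub_rpow_add_rpow_le hμ0 hμ1 hp hμp hb
  calc (2 ^ μ - 1) * (4 * x * y) ^ p + (2 * (x ^ 2 + y ^ 2)) ^ μ * S ^ (p - μ)
      = S ^ p * ((2 ^ μ - 1) * (2 - b) ^ p + b ^ μ) := by
        rw [hsq, hxy4, mul_rpow hS.le (by linarith [hb.2]), mul_rpow hS.le (by linarith [hb.1]),
          mul_right_comm, ← rpow_add hS, add_sub_cancel]
        ring
    _ ≤ 2 ^ μ * S ^ p := by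
        rw [mul_comm (2 ^ μ)]; gcongr

section

variable {k : ℕ}

theorem natCast_lt_logb_two_pow_add_two : (k : ℝ) < logb 2 (2 ^ k + 2) := by
  rw [lt_logb_iff_rpow_lt one_lt_two (by positivity), rpow_natCast]
  linarith

theorem logb_two_pow_add_two_le (hk : 1 ≤ k) : logb 2 (2 ^ k + 2) ≤ k + 1 := by
  rw [logb_le_iff_le_rpow one_lt_two (by positivity), ← Nat.cast_succ, rpow_natCast, pow_succ]
  linarith [one_le_pow₀ (M₀ := ℝ) one_le_two (n := k - 1),
    show (2 : ℝ) ^ k = 2 ^ (k - 1) * 2 by rw [← pow_succ, Nat.sub_add_cancel hk]]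

theorem logb_two_pow_add_two_sub_mul_le (hk : 2 ≤ k) :
    (logb 2 (2 ^ k + 2) - k) * 2 ^ k ≤ logb 2 (2 ^ k + 2) := by
  set q := logb 2 (2 ^ k + 2)
  have hkq : (k : ℝ) < q := natCast_lt_logb_two_pow_add_two
  rcases hk.eq_or_lt with rfl | hk3
  · -- `q = log₂ 6 ≤ 8/3` because `6³ ≤ 2⁸`
    have hq : q ≤ 8 / 3 := by
      rw [logb_le_iff_le_rpow one_lt_two (by positivity)]
      refine le_of_pow_le_pow_left₀ three_ne_zero (by positivity) ?_
      rw [← rpow_natCast (2 ^ (8 / 3 : ℝ)) 3, ← rpow_mul zero_le_two]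
      norm_num
    norm_num at hkq ⊢
    linarith
  · -- `(q - k) log 2 = log (1 + 2 / 2^k) ≤ 2 / 2^k`, and `2 / log 2 < 3 ≤ k`
    have hlog : (q - k) * log 2 = log (1 + 2 / 2 ^ k) := by
      have hq : q * log 2 = log (2 ^ k + 2) := div_mul_cancel₀ _ (log_pos one_lt_two).ne'
      rw [sub_mul, hq, ← log_pow, ← log_div (by positivity) (by positivity)]
      congr 1
      field_simp
    have h1 : log (1 + 2 / 2 ^ k) ≤ 2 / 2 ^ k := by
      linarith [log_le_sub_one_of_pos (by positivity : (0 : ℝ) < 1 + 2 / 2 ^ k)]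
    have hlog2 := log_two_gt_d9
    have h3 : (3 : ℝ) ≤ k := by exact_mod_cast hk3
    have : (q - k) * 2 ^ k * log 2 ≤ 2 := by
      calc (q - k) * 2 ^ k * log 2 = log (1 + 2 / 2 ^ k) * 2 ^ k := by rw [← hlog]; ring
        _ ≤ 2 / 2 ^ k * 2 ^ k := by gcongr
        _ = 2 := div_mul_cancel₀ _ (by positivity)
    have : (q - k) * 2 ^ k < 3 := by nlinarith
    linarith

theorem two_mul_rpow_add_rpow_mul_rpow_le_logb (hk : 2 ≤ k) {x y : ℝ} (hx : 0 ≤ x) (hy : 0 ≤ y) :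
    2 * (x * y) ^ (logb 2 (2 ^ k + 2) / 2)
      + (x + y) ^ (2 * k - logb 2 (2 ^ k + 2)) * (x ^ 2 + y ^ 2) ^ (logb 2 (2 ^ k + 2) - k)
      ≤ (x + y) ^ logb 2 (2 ^ k + 2) := by
  set q := logb 2 (2 ^ k + 2)
  have hk2 : (2 : ℝ) ≤ k := by exact_mod_cast hk
  have hkq : (k : ℝ) < q := natCast_lt_logb_two_pow_add_two
  have hqk : q ≤ k + 1 := logb_two_pow_add_two_le (by omega)
  have h2q : (2 : ℝ) ^ q = 2 ^ k + 2 := rpow_logb two_pos (by norm_num) (by positivity)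
  have h2μ : (2 : ℝ) ^ (q - k) = (2 ^ k + 2) / 2 ^ k := by rw [rpow_sub two_pos, h2q, rpow_natCast]
  have h4 : (4 : ℝ) ^ (q / 2) = 2 ^ k + 2 := by
    rw [show (4 : ℝ) = 2 ^ (2 : ℝ) by norm_num, ← rpow_mul zero_le_two,
      mul_div_cancel₀ _ two_ne_zero, h2q]
  have hμp : q - k ≤ (2 ^ (q - k) - 1) * (q / 2) := by
    rw [h2μ, show ((2 ^ k + 2) / 2 ^ k - 1) * (q / 2) = q / 2 ^ k by field_simp; ring,
      le_div_iff₀ (by positivity)]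
    exact logb_two_pow_add_two_sub_mul_le hk
  have hsq : ∀ r : ℝ, ((x + y) ^ 2) ^ r = (x + y) ^ (2 * r) := fun r => by
    rw [← rpow_natCast, ← rpow_mul (by positivity)]; norm_num
  have hD := two_rpow_sub_one_mul_rpow_add_le (μ := q - k) (p := q / 2) hx hy (by linarith)
    (by linarith) (by linarith) hμp
  rw [mul_assoc 4, mul_rpow zero_le_four (mul_nonneg hx hy), h4,
    mul_rpow zero_le_two (by positivity), h2μ, hsq, hsq,
    show 2 * (q / 2 - (q - k)) = 2 * k - q by ring, mul_div_cancel₀ _ two_ne_zero] at hD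
  refine le_of_mul_le_mul_left (hD.trans_eq' ?_) (by positivity : (0 : ℝ) < (2 ^ k + 2) / 2 ^ k)
  field_simp
  ring

end

theorem higher_energy_two_var_ineq (k : ℕ) (hk : 2 ≤ k) (x y : ℝ) (hx : 0 ≤ x) (hy : 0 ≤ y) :
    2 * x ^ (Real.logb 2 (2^k + 2) / 2) * y ^ (Real.logb 2 (2^k + 2) / 2)
      + (x ^ (Real.logb 2 (2^k + 2) / k) + y ^ (Real.logb 2 (2^k + 2) / k)) ^ k
      ≤ (x + y) ^ (Real.logb 2 (2^k + 2)) := by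
  have hk2 : (2 : ℝ) ≤ k := by exact_mod_cast hk
  have hqk : logb 2 (2 ^ k + 2) ≤ 2 * k := by linarith [logb_two_pow_add_two_le (k := k) (by omega)]
  calc _ = 2 * (x * y) ^ (logb 2 (2 ^ k + 2) / 2)
        + (x ^ (logb 2 (2 ^ k + 2) / k) + y ^ (logb 2 (2 ^ k + 2) / k)) ^ k := by
        rw [mul_rpow hx hy, mul_assoc]
    _ ≤ 2 * (x * y) ^ (logb 2 (2 ^ k + 2) / 2)
        + (x + y) ^ (2 * k - logb 2 (2 ^ k + 2)) * (x ^ 2 + y ^ 2) ^ (logb 2 (2 ^ k + 2) - k) := by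
        gcongr
        exact rpow_div_add_rpow_div_pow_le hx hy natCast_lt_logb_two_pow_add_two hqk
    _ ≤ _ := two_mul_rpow_add_rpow_mul_rpow_le_logb hk hx hy
end

section
/- For all real $z \in [0,1]$ and every integer $k \geq 2$, with $q_k = \log_2(2^k+2)$, we have $1 + z^{q_k/2}/2^{k-1} \leq (1+z)^{q_k - k}$. -/
open Real

theorem concave_convex_ineq (k : ℕ) (hk : 2 ≤ k) (z : ℝ) (hz : z ∈ Set.Icc (0:ℝ) 1) :
    1 + z ^ (Real.logb 2 (2^k + 2) / 2) / 2 ^ (k - 1)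
      ≤ (1 + z) ^ (Real.logb 2 (2^k + 2) - k) := by
  obtain ⟨hz0, hz1⟩ := hz
  set q : ℝ := Real.logb 2 (2^k + 2) with hq
  have h2k : (4:ℝ) ≤ 2^k := by
    calc (4:ℝ) = 2^2 := by norm_num
    _ ≤ 2^k := pow_le_pow_right₀ (by norm_num) hk
  have hpos : (0:ℝ) < 2^k + 2 := by linarith
  have hlogk : Real.logb 2 ((2:ℝ)^k) = k := by
    rw [Real.logb_pow, Real.logb_self_eq_one (by norm_num)]
    ring
  have hqk : (k:ℝ) < q := by
    have := Real.logb_lt_logb (by norm_num : (1:ℝ) < 2)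
      (show (0:ℝ) < 2^k by positivity) (show (2:ℝ)^k < 2^k+2 by linarith)
    rw [hlogk] at this; exact this
  have hqk1 : q < k + 1 := by
    have h : (2:ℝ)^k + 2 < 2^(k+1) := by
      rw [pow_succ]; nlinarith
    have := Real.logb_lt_logb (by norm_num : (1:ℝ) < 2) hpos h
    rw [show (2:ℝ)^(k+1) = 2^k * 2 by ring, Real.logb_mul (by positivity) (by norm_num),
      hlogk, Real.logb_self_eq_one (by norm_num)] at this
    linarith
  -- value of 2 ^ (q - k)
  have h2qk : (2:ℝ) ^ (q - (k:ℝ)) = 1 + 1 / 2^(k-1) := by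
    rw [Real.rpow_sub (by norm_num), Real.rpow_natCast,
      Real.rpow_logb (by norm_num) (by norm_num) hpos]
    have hk1 : (2:ℝ)^(k-1) * 2 = 2^k := by
      rw [← pow_succ]
      congr 1
      omega
    field_simp
    nlinarith [h2k]
  -- convex side: z ^ (q/2) ≤ z
  have hconv : z ^ (q / 2) ≤ z := by
    have hk2 : (2:ℝ) ≤ k := by exact_mod_cast hk
    rcases eq_or_lt_of_le hz0 with h | h
    · rw [← h, Real.zero_rpow (ne_of_gt (by linarith : (0:ℝ) < q/2))]
    · calc z ^ (q/2) ≤ z ^ (1:ℝ) :=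
          Real.rpow_le_rpow_of_exponent_ge h hz1 (by linarith)
      _ = z := Real.rpow_one z
  -- concave side
  have hcc : 1 + z * (2 ^ (q - (k:ℝ)) - 1) ≤ (1 + z) ^ (q - (k:ℝ)) := by
    have hα0 : (0:ℝ) < q - k := by linarith
    have hα1 : q - (k:ℝ) < 1 := by linarith
    have := (Real.strictConcaveOn_rpow hα0 hα1).concaveOn.2
      (Set.mem_Ici.2 (by norm_num : (0:ℝ) ≤ 1))
      (Set.mem_Ici.2 (by norm_num : (0:ℝ) ≤ 2))
      (by linarith : 0 ≤ 1 - z) hz0 (by ring)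
    simp only [smul_eq_mul] at this
    rw [Real.one_rpow] at this
    calc 1 + z * (2 ^ (q - (k:ℝ)) - 1) = (1-z)*1 + z * 2 ^ (q-(k:ℝ)) := by ring
    _ ≤ ((1-z)*1 + z*2) ^ (q-(k:ℝ)) := this
    _ = (1+z) ^ (q-(k:ℝ)) := by ring_nf
  have h2pos : (0:ℝ) < 2^(k-1) := by positivity
  calc 1 + z ^ (q/2) / 2^(k-1) ≤ 1 + z / 2^(k-1) := by
        gcongr
  _ = 1 + z * (2 ^ (q - (k:ℝ)) - 1) := by rw [h2qk]; ring
  _ ≤ (1 + z) ^ (q - (k:ℝ)) := hcc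
end

section
/- Let $d \geq 0$, $k = 2$, and $A \subseteq \{0,1\}^d \subset \mathbb{Z}^d$. Then the additive energy $E(A)$, the number of quadruples $(a_1,a_2,a_3,a_4) \in A^4$ with $a_1 + a_2 = a_3 + a_4$, satisfies $E(A) \leq |A|^{\log_2 6}$. -/
/-!
Split `A` along a coordinate `i` into `A₀ = {v ∈ A | vᵢ = 0}` and `A₁ = {v ∈ A | vᵢ = 1}`.
Comparing `i`-th coordinates in `a + b = c + e` gives `E(A) ≤ E(A₀) + E(A₁) + 4 E(A₀, A₁)`, and
Cauchy–Schwarz gives `E(A₀, A₁)² ≤ E(A₀) E(A₁)`. By induction on `|A|` it then suffices that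
`x ^ p + y ^ p + (2 ^ p - 2) (x y) ^ (p / 2) ≤ (x + y) ^ p`, as `2 ^ p - 2 = 4` for `p = log₂ 6`.
This holds for every `p ≥ 2` because `((r + 1) ^ p - r ^ p - 1) / r ^ (p / 2)` is nondecreasing on
`r ≥ 1`, which comes down to `r ^ p - 1 ≤ (r - 1) (r + 1) ^ (p - 1)`.
-/

open scoped Combinatorics.Additive Pointwise

namespace Real

lemma sub_one_mul_rpow_sub_two_le {p r : ℝ} (hp : 2 ≤ p) (hr : 0 ≤ r) :
    (p - 1) * r ^ (p - 2) ≤ (p - 2) * r ^ (p - 1) + 1 := by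
  have hp1 : 0 < p - 1 := by linarith
  have amgm := geom_mean_le_arith_mean2_weighted (w₁ := (p - 2) / (p - 1)) (w₂ := 1 / (p - 1))
    (by bound) (by positivity) (rpow_nonneg hr (p - 1)) zero_le_one (by field_simp; ring)
  rw [one_rpow, mul_one, ← rpow_mul hr, mul_div_cancel₀ _ hp1.ne'] at amgm
  calc (p - 1) * r ^ (p - 2)
      ≤ (p - 1) * ((p - 2) / (p - 1) * r ^ (p - 1) + 1 / (p - 1) * 1) := by gcongr
    _ = (p - 2) * r ^ (p - 1) + 1 := by field_simp

lemma rpow_sub_one_le_sub_one_mul_add_one_rpow {p r : ℝ} (hp : 2 ≤ p) (hr : 1 ≤ r) :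
    r ^ p - 1 ≤ (r - 1) * (r + 1) ^ (p - 1) := by
  have hr0 : 0 < r := by linarith
  have e1 : r * r ^ (p - 1) = r ^ p := by
    rw [mul_comm, ← rpow_add_one hr0.ne']; ring_nf
  have e2 : r * r ^ (p - 2) = r ^ (p - 1) := by
    rw [mul_comm, ← rpow_add_one hr0.ne']; ring_nf
  have bernoulli : r ^ (p - 1) + (p - 1) * r ^ (p - 2) ≤ (r + 1) ^ (p - 1) := by
    have h := one_add_mul_self_le_rpow_one_add (s := r⁻¹) (by linarith [inv_pos.2 hr0])
      (p := p - 1) (by linarith)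
    have hsplit : (r + 1) ^ (p - 1) = r ^ (p - 1) * (1 + r⁻¹) ^ (p - 1) := by
      rw [← mul_rpow hr0.le (by positivity)]; congr 1; field_simp
    calc r ^ (p - 1) + (p - 1) * r ^ (p - 2) = r ^ (p - 1) * (1 + (p - 1) * r⁻¹) := by
          rw [← e2]; field_simp
      _ ≤ (r + 1) ^ (p - 1) := by rw [hsplit]; gcongr
  calc r ^ p - 1 ≤ (r - 1) * (r ^ (p - 1) + (p - 1) * r ^ (p - 2)) := by
        linear_combination sub_one_mul_rpow_sub_two_le hp hr0.le - e1 - p * e2 + e2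
    _ ≤ (r - 1) * (r + 1) ^ (p - 1) := by gcongr

lemma monotoneOn_add_one_rpow_sub_rpow_sub_one_div {p : ℝ} (hp : 2 ≤ p) :
    MonotoneOn (fun r : ℝ => ((r + 1) ^ p - r ^ p - 1) / r ^ (p / 2)) (Set.Ici 1) := by
  have hderiv : ∀ r : ℝ, 0 < r →
      HasDerivAt (fun r : ℝ => ((r + 1) ^ p - r ^ p - 1) / r ^ (p / 2))
        (((p * (r + 1) ^ (p - 1) - p * r ^ (p - 1)) * r ^ (p / 2)
          - ((r + 1) ^ p - r ^ p - 1) * (p / 2 * r ^ (p / 2 - 1))) / (r ^ (p / 2)) ^ 2) r := by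
    intro r hr
    have h1 := ((hasDerivAt_id r).add_const 1).rpow_const (p := p) (Or.inr (by linarith))
    have h2 := hasDerivAt_rpow_const (x := r) (p := p) (Or.inr (by linarith))
    have hnum : HasDerivAt (fun r : ℝ => (r + 1) ^ p - r ^ p - 1)
        (p * (r + 1) ^ (p - 1) - p * r ^ (p - 1)) r :=
      ((h1.sub h2).sub_const 1).congr_deriv (by simp)
    exact hnum.div (hasDerivAt_rpow_const (Or.inl hr.ne')) (rpow_pos_of_pos hr _).ne'
  refine monotoneOn_of_deriv_nonneg (convex_Ici 1) ?_ ?_ ?_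
  · exact fun r hr => (hderiv r (zero_lt_one.trans_le hr)).continuousAt.continuousWithinAt
  · rw [interior_Ici]
    exact fun r hr => (hderiv r (zero_lt_one.trans hr)).differentiableAt.differentiableWithinAt
  rw [interior_Ici]
  intro r hr
  have hr0 : 0 < r := zero_lt_one.trans hr
  rw [(hderiv r hr0).deriv]
  have e1 : r * r ^ (p - 1) = r ^ p := by
    rw [mul_comm, ← rpow_add_one hr0.ne']; ring_nf
  have e2 : (r + 1) * (r + 1) ^ (p - 1) = (r + 1) ^ p := by
    rw [mul_comm, ← rpow_add_one (by linarith)]; ring_nf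
  have e3 : r * r ^ (p / 2 - 1) = r ^ (p / 2) := by
    rw [mul_comm, ← rpow_add_one hr0.ne']; ring_nf
  have hnum : (p * (r + 1) ^ (p - 1) - p * r ^ (p - 1)) * r ^ (p / 2)
        - ((r + 1) ^ p - r ^ p - 1) * (p / 2 * r ^ (p / 2 - 1))
      = p / 2 * r ^ (p / 2 - 1) * ((r - 1) * (r + 1) ^ (p - 1) - (r ^ p - 1)) := by
    rw [← e1, ← e2, ← e3]; ring
  have key := rpow_sub_one_le_sub_one_mul_add_one_rpow hp hr.le
  have hpow := rpow_nonneg hr0.le (p / 2 - 1)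
  rw [hnum]
  exact div_nonneg (mul_nonneg (mul_nonneg (by linarith) hpow) (by linarith)) (sq_nonneg _)

lemma rpow_add_rpow_add_mul_rpow_le_add_rpow {p x y : ℝ} (hp : 2 ≤ p) (hx : 0 ≤ x)
    (hy : 0 ≤ y) : x ^ p + y ^ p + (2 ^ p - 2) * (x * y) ^ (p / 2) ≤ (x + y) ^ p := by
  wlog hyx : y ≤ x generalizing x y
  · simpa only [add_comm (y ^ p), mul_comm y, add_comm y] using this hy hx (le_of_not_ge hyx)
  obtain rfl | hy0 := hy.eq_or_lt
  · simp [zero_rpow (by linarith : p ≠ 0), zero_rpow (by linarith : p / 2 ≠ 0)]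
  have hr : 1 ≤ x / y := (one_le_div hy0).2 hyx
  have hmono : (2 : ℝ) ^ p - 2 ≤ ((x / y + 1) ^ p - (x / y) ^ p - 1) / (x / y) ^ (p / 2) := by
    have h := monotoneOn_add_one_rpow_sub_rpow_sub_one_div hp Set.self_mem_Ici hr hr
    simp only [one_rpow, div_one, one_add_one_eq_two] at h
    linarith
  rw [le_div_iff₀ (by positivity)] at hmono
  have hxy : (x + y) ^ p = (x / y + 1) ^ p * y ^ p := by
    rw [← mul_rpow (by positivity) hy]; congr 1; field_simp
  have hx' : x ^ p = (x / y) ^ p * y ^ p := by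
    rw [← mul_rpow (by positivity) hy]; congr 1; field_simp
  have hxy' : (x * y) ^ (p / 2) = (x / y) ^ (p / 2) * y ^ p := by
    rw [show y ^ p = (y ^ 2) ^ (p / 2) by rw [← rpow_natCast, ← rpow_mul hy]; norm_num; ring_nf,
      ← mul_rpow (by positivity) (by positivity)]
    congr 1; field_simp
  rw [hxy, hx', hxy']
  nlinarith [rpow_pos_of_pos hy0 p]

lemma two_le_of_six_le_two_rpow {p : ℝ} (hp : 6 ≤ (2 : ℝ) ^ p) : 2 ≤ p := by
  by_contra! h
  have := rpow_lt_rpow_of_exponent_lt one_lt_two h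
  norm_num at this
  linarith

end Real

namespace Finset

section AddCommGroup

variable {G : Type*} [AddCommGroup G] [DecidableEq G]

lemma addEnergy_singleton (a b : G) : E[{a}, {b}] = 1 := by simp [addEnergy, filter_singleton]

lemma addEnergy_eq_sum_card_sub_mul {s U : Finset G} (t : Finset G) (hU : s - s ⊆ U) :
    E[s, t] = ∑ x ∈ U, #{ab ∈ s ×ˢ s | ab.1 - ab.2 = x} * #{ab ∈ t ×ˢ t | ab.1 - ab.2 = x} := by
  rw [addEnergy, card_eq_sum_card_fiberwise (f := fun q => q.1.1 - q.1.2) (t := U)]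
  · refine sum_congr rfl fun x _ => ?_
    rw [filter_filter, ← card_product]
    refine card_equiv ((Equiv.refl _).prodCongr (Equiv.prodComm _ _)) fun q => ?_
    obtain ⟨⟨a₁, a₂⟩, b₁, b₂⟩ := q
    simp only [mem_filter, mem_product, Equiv.prodCongr_apply, Equiv.coe_refl, Prod.map,
      id, Equiv.prodComm_apply, Prod.swap]
    grind
  · rintro ⟨⟨a₁, a₂⟩, b⟩ h
    simp only [coe_filter, mem_product, Set.mem_ofPred_eq] at h
    exact hU (sub_mem_sub h.1.1.1 h.1.1.2)

lemma addEnergy_sq_le_addEnergy_mul_addEnergy (s t : Finset G) : E[s, t] ^ 2 ≤ E[s] * E[t] := by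
  have hs : s - s ⊆ (s - s) ∪ (t - t) := subset_union_left
  have ht : t - t ⊆ (s - s) ∪ (t - t) := subset_union_right
  rw [addEnergy_eq_sum_card_sub_mul t hs, addEnergy_eq_sum_card_sub_mul s hs,
    addEnergy_eq_sum_card_sub_mul t ht]
  simpa only [sq] using sum_mul_sq_le_sq_mul_sq _ _ _

lemma addEnergy_le_of_forall_apply_eq_zero_or_one (φ : G →+ ℤ) (A : Finset G)
    (hA : ∀ a ∈ A, φ a = 0 ∨ φ a = 1) :
    E[A] ≤ E[A.filter (φ · = 0)] + E[A.filter (φ · = 1)]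
      + 4 * E[A.filter (φ · = 0), A.filter (φ · = 1)] := by
  set A₀ := A.filter (φ · = 0)
  set A₁ := A.filter (φ · = 1)
  let Q : Finset G → Finset G → Finset ((G × G) × G × G) := fun s t =>
    {x ∈ (s ×ˢ t) ×ˢ s ×ˢ t | x.1.1 + x.1.2 = x.2.1 + x.2.2}
  simp only [addEnergy_eq_card_filter]
  change #(Q A A) ≤ #(Q A₀ A₀) + #(Q A₁ A₁) + 4 * #(Q A₀ A₁)
  -- In `a + b = c + e`, applying `φ` forces either `φ a = φ b = φ c = φ e`,
  -- or one value `0` and one value `1` on each side.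
  have hcover : Q A A ⊆ Q A₀ A₀ ∪ Q A₁ A₁ ∪ (Q A₀ A₁ ∪ (Q A₀ A₁).image (Prod.map Prod.swap id)
      ∪ (Q A₀ A₁).image (Prod.map id Prod.swap)
      ∪ (Q A₀ A₁).image (Prod.map Prod.swap Prod.swap)) := by
    rintro ⟨⟨a, b⟩, c, e⟩ h
    simp only [Q, A₀, A₁, mem_filter, mem_product, mem_union, mem_image, Prod.exists, Prod.map,
      Prod.swap, id, Prod.mk.injEq] at h ⊢
    have hφ : φ a + φ b = φ c + φ e := by rw [← map_add, ← map_add, h.2]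
    rcases hA a h.1.1.1 with ha | ha <;> rcases hA b h.1.1.2 with hb | hb <;>
      rcases hA c h.1.2.1 with hc | hc <;> rcases hA e h.1.2.2 with he | he <;>
      first | omega | grind
  calc #(Q A A) ≤ _ := card_le_card hcover
    _ ≤ _ := by
      grw [card_union_le, card_union_le, card_union_le, card_union_le, card_union_le,
        card_image_le, card_image_le, card_image_le]
      omega

lemma addEnergy_le_card_rpow_of_card_le_one {A : Finset G} (hA : #A ≤ 1) {p : ℝ} (hp : 0 < p) :
    (E[A] : ℝ) ≤ (#A : ℝ) ^ p := by
  obtain h | h := Nat.le_one_iff_eq_zero_or_eq_one.1 hA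
  · simp [card_eq_zero.1 h, Real.zero_rpow hp.ne']
  · obtain ⟨a, rfl⟩ := card_eq_one.1 h
    simp [addEnergy_singleton]

lemma addEnergy_le_card_rpow_of_addEnergy_filter_le (φ : G →+ ℤ) (A : Finset G)
    (hA : ∀ a ∈ A, φ a = 0 ∨ φ a = 1) {p : ℝ} (hp : 6 ≤ (2 : ℝ) ^ p)
    (h₀ : (E[A.filter (φ · = 0)] : ℝ) ≤ (#(A.filter (φ · = 0)) : ℝ) ^ p)
    (h₁ : (E[A.filter (φ · = 1)] : ℝ) ≤ (#(A.filter (φ · = 1)) : ℝ) ^ p) :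
    (E[A] : ℝ) ≤ (#A : ℝ) ^ p := by
  set A₀ := A.filter (φ · = 0)
  set A₁ := A.filter (φ · = 1)
  have hcard : (#A₀ : ℝ) + #A₁ = #A := by
    have hA₁ : A₁ = A.filter (¬φ · = 0) := filter_congr fun u hu => by grind [hA u hu]
    rw [hA₁]; exact_mod_cast card_filter_add_card_filter_not _
  have hcross : (E[A₀, A₁] : ℝ) ≤ ((#A₀ : ℝ) * #A₁) ^ (p / 2) := by
    refine (pow_le_pow_iff_left₀ (by positivity) (by positivity) two_ne_zero).1 ?_
    calc (E[A₀, A₁] : ℝ) ^ 2 ≤ E[A₀] * E[A₁] := by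
          exact_mod_cast addEnergy_sq_le_addEnergy_mul_addEnergy A₀ A₁
      _ ≤ (#A₀ : ℝ) ^ p * (#A₁ : ℝ) ^ p := by gcongr
      _ = (((#A₀ : ℝ) * #A₁) ^ (p / 2)) ^ 2 := by
          rw [← Real.rpow_mul_natCast (by positivity),
            Real.mul_rpow (by positivity) (by positivity)]
          norm_num
  calc (E[A] : ℝ) ≤ E[A₀] + E[A₁] + 4 * E[A₀, A₁] := by
        exact_mod_cast addEnergy_le_of_forall_apply_eq_zero_or_one φ A hA
    _ ≤ (#A₀ : ℝ) ^ p + (#A₁ : ℝ) ^ p + (2 ^ p - 2) * ((#A₀ : ℝ) * #A₁) ^ (p / 2) := by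
        gcongr <;> linarith
    _ ≤ (#A : ℝ) ^ p := by
        rw [← hcard]
        exact Real.rpow_add_rpow_add_mul_rpow_le_add_rpow (Real.two_le_of_six_le_two_rpow hp)
          (by positivity) (by positivity)

end AddCommGroup

theorem addEnergy_le_card_rpow_of_six_le_two_rpow {ι : Type*} [DecidableEq (ι → ℤ)]
    (A : Finset (ι → ℤ)) (hA : ∀ v ∈ A, ∀ i, v i = 0 ∨ v i = 1) {p : ℝ} (hp : 6 ≤ (2 : ℝ) ^ p) :
    (E[A] : ℝ) ≤ (#A : ℝ) ^ p := by
  induction A using Finset.strongInduction with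
  | H A ih =>
  by_cases hsplit : ∃ i, ∃ v ∈ A, ∃ w ∈ A, v i ≠ w i
  swap
  · push Not at hsplit
    exact addEnergy_le_card_rpow_of_card_le_one
      (card_le_one.2 fun v hv w hw => funext fun i => hsplit i v hv w hw)
      (two_pos.trans_le (Real.two_le_of_six_le_two_rpow hp))
  obtain ⟨i, v, hv, w, hw, hvw⟩ := hsplit
  have hproper (c : ℤ) : A.filter (fun u => u i = c) ⊂ A :=
    filter_ssubset.2 (by by_cases hc : v i = c; exacts [⟨w, hw, by grind⟩, ⟨v, hv, hc⟩])
  have hsub (c : ℤ) : ∀ u ∈ A.filter (fun u => u i = c), ∀ j, u j = 0 ∨ u j = 1 :=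
    fun u hu => hA u (filter_subset _ _ hu)
  exact addEnergy_le_card_rpow_of_addEnergy_filter_le (Pi.evalAddMonoidHom _ i) A
    (fun u hu => hA u hu i) hp (ih _ (hproper 0) (hsub 0)) (ih _ (hproper 1) (hsub 1))

end Finset

theorem kane_tao (d : ℕ) (A : Finset (Fin d → ℤ))
    (hA : ∀ v ∈ A, ∀ i, v i = 0 ∨ v i = 1) :
    ((((A ×ˢ A) ×ˢ (A ×ˢ A)).filter
        (fun p => p.1.1 + p.1.2 = p.2.1 + p.2.2)).card : ℝ)
      ≤ (A.card : ℝ) ^ (Real.logb 2 6) := by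
  rw [← Finset.addEnergy_eq_card_filter]
  exact Finset.addEnergy_le_card_rpow_of_six_le_two_rpow A hA
    (Real.rpow_logb two_pos (by norm_num) (by norm_num)).ge
end

section
/- Let $k = 2$ and $p = \log_2 6$. For all nonnegative reals $a, b$: $a^p + 4 a^{p/2} b^{p/2} + b^p \leq (a+b)^p$. -/
open Real Set

/-!
Dividing by `a ^ p` for `b ≤ a`, it suffices that `F t = (1 + t) ^ p - 4 t ^ (p / 2) - t ^ p`
is at least `1` on `[0, 1]`. We have `F 0 = F 1 = 1`, and `2 ^ p = 6` also gives `F' 1 = 0`.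
For `5 / 2 ≤ p ≤ 3` the tangent-line bound
`(1 + t) ^ (p - 3) ≥ t ^ (p - 3) + (p - 3) t ^ (p - 4)` makes `F'''` nonnegative on `(0, 1]`,
so `F'` is convex there. A convex `F'` with `F' 1 = 0` is `≥ 0` up to some point and `≤ 0` after
it, so `F` increases and then decreases on `[0, 1]`, and its minimum is attained at an endpoint.
-/

theorem min_le_of_convexOn_deriv {f f' : ℝ → ℝ} {a b x : ℝ} (hf : ContinuousOn f (Icc a b))
    (hf' : ∀ y ∈ Ioo a b, HasDerivAt f (f' y) y) (hconv : ConvexOn ℝ (Ioc a b) f')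
    (hb : f' b ≤ 0) (hx : x ∈ Icc a b) : min (f a) (f b) ≤ f x := by
  by_cases hneg : ∃ s ∈ Ioo a x, f' s < 0
  · obtain ⟨s, hs, hfs⟩ := hneg
    have hanti : AntitoneOn f (Icc x b) := by
      refine antitoneOn_of_hasDerivWithinAt_nonpos (f' := f') (convex_Icc x b)
        (hf.mono (Icc_subset_Icc_left hx.1)) (fun y hy => ?_) (fun y hy => ?_) <;>
        rw [interior_Icc] at hy
      · exact (hf' y ⟨hs.1.trans (hs.2.trans hy.1), hy.2⟩).hasDerivWithinAt
      · calc f' y ≤ max (f' s) (f' b) :=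
              hconv.le_max_of_mem_Icc ⟨hs.1, (hs.2.trans_le hx.2).le⟩
                ⟨hs.1.trans (hs.2.trans_le hx.2), le_rfl⟩ ⟨(hs.2.trans hy.1).le, hy.2.le⟩
          _ ≤ 0 := max_le hfs.le hb
    exact (min_le_right _ _).trans (hanti ⟨le_rfl, hx.2⟩ ⟨hx.2, le_rfl⟩ hx.2)
  · push Not at hneg
    have hmono : MonotoneOn f (Icc a x) := by
      refine monotoneOn_of_hasDerivWithinAt_nonneg (f' := f') (convex_Icc a x)
        (hf.mono (Icc_subset_Icc_right hx.2)) (fun y hy => ?_) (fun y hy => ?_) <;>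
        rw [interior_Icc] at hy
      · exact (hf' y ⟨hy.1, hy.2.trans_le hx.2⟩).hasDerivWithinAt
      · exact hneg y hy
    exact (min_le_left _ _).trans (hmono ⟨le_rfl, hx.1⟩ ⟨hx.1, le_rfl⟩ hx.1)

theorem mul_rpow_sub_one_le_one_add_rpow_sub_rpow {q t : ℝ} (hq : q ≤ 0) (ht : 0 < t) :
    q * t ^ (q - 1) ≤ (1 + t) ^ q - t ^ q := by
  have hne : ∀ x ∈ Ici t, x ≠ 0 := fun x hx => (ht.trans_le hx).ne'
  have hderiv : ∀ x ∈ interior (Ici t), q * t ^ (q - 1) ≤ deriv (fun x => x ^ q) x := by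
    intro x hx
    rw [interior_Ici] at hx
    rw [Real.deriv_rpow_const]
    exact mul_le_mul_of_nonpos_left (rpow_le_rpow_of_nonpos ht hx.le (by linarith)) hq
  simpa using (convex_Ici t).mul_sub_le_image_sub_of_le_deriv
    (continuousOn_id.rpow_const fun x hx => Or.inl (hne x hx))
    (differentiableOn_id.rpow_const fun x hx => Or.inl (hne x (interior_subset hx)))
    hderiv t self_mem_Ici (1 + t) (by simp) (by linarith)

/-- `t ↦ (1+t)^p - 4 t^{p/2} - t^p` is `legendreGap 1 4 p (p/2)`, and differentiating stays
inside this family. -/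
noncomputable def legendreGap (A B q r t : ℝ) : ℝ := A * ((1 + t) ^ q - t ^ q) - B * t ^ r

theorem hasDerivAt_legendreGap (A B q r : ℝ) {t : ℝ} (ht : 0 < t) :
    HasDerivAt (legendreGap A B q r) (legendreGap (A * q) (B * r) (q - 1) (r - 1) t) t := by
  have h1 : HasDerivAt (fun x : ℝ => (1 + x) ^ q) (q * (1 + t) ^ (q - 1)) t := by
    simpa using ((hasDerivAt_id t).const_add 1).rpow_const (p := q) (Or.inl (by positivity))
  have h2 := hasDerivAt_rpow_const (p := q) (Or.inl ht.ne')
  have h3 := hasDerivAt_rpow_const (p := r) (Or.inl ht.ne')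
  refine (((h1.sub h2).const_mul A).sub (h3.const_mul B)).congr_deriv ?_
  rw [legendreGap]
  ring

theorem legendreGap_nonneg {A B q r t : ℝ} (hA : 0 ≤ A) (hq : q ≤ 0) (hr : r ≤ q - 1)
    (hB : B ≤ A * q) (ht : 0 < t) (ht1 : t ≤ 1) : 0 ≤ legendreGap A B q r t := by
  have hAq : A * q ≤ 0 := mul_nonpos_of_nonneg_of_nonpos hA hq
  have htr : t ^ (q - 1) ≤ t ^ r := rpow_le_rpow_of_exponent_ge ht ht1 hr
  calc 0 ≤ (A * q - B) * t ^ r := mul_nonneg (sub_nonneg.2 hB) (rpow_nonneg ht.le r)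
    _ = A * q * t ^ r - B * t ^ r := by ring
    _ ≤ A * q * t ^ (q - 1) - B * t ^ r := by
      gcongr ?_ - _
      exact mul_le_mul_of_nonpos_left htr hAq
    _ ≤ legendreGap A B q r t := by
      rw [legendreGap, mul_assoc]
      gcongr
      exact mul_rpow_sub_one_le_one_add_rpow_sub_rpow hq ht

theorem convexOn_legendreGap {A B q r : ℝ} (hA : 0 ≤ A * q * (q - 1)) (hq : q ≤ 2)
    (hr : r ≤ q - 1) (hB : B * r * (r - 1) ≤ A * q * (q - 1) * (q - 2)) :
    ConvexOn ℝ (Ioc 0 1) (legendreGap A B q r) := by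
  refine convexOn_of_hasDerivWithinAt2_nonneg (convex_Ioc 0 1)
    (f' := legendreGap (A * q) (B * r) (q - 1) (r - 1))
    (f'' := legendreGap (A * q * (q - 1)) (B * r * (r - 1)) (q - 1 - 1) (r - 1 - 1))
    (fun t ht => (hasDerivAt_legendreGap A B q r ht.1).continuousAt.continuousWithinAt)
    (fun t ht => ?_) (fun t ht => ?_) (fun t ht => ?_) <;> rw [interior_Ioc] at ht
  · exact (hasDerivAt_legendreGap A B q r ht.1).hasDerivWithinAt
  · exact (hasDerivAt_legendreGap _ _ _ _ ht.1).hasDerivWithinAt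
  · exact legendreGap_nonneg hA (by linarith) (by linarith) (by linarith) ht.1 ht.2.le

theorem one_add_four_mul_rpow_half_add_rpow_le {p t : ℝ} (hp : 5 / 2 ≤ p) (hp3 : p ≤ 3)
    (h2p : (2 : ℝ) ^ p = 6) (ht : t ∈ Icc 0 1) :
    1 + 4 * t ^ (p / 2) + t ^ p ≤ (1 + t) ^ p := by
  have hcont : Continuous (legendreGap 1 4 p (p / 2)) := by
    unfold legendreGap; fun_prop (disch := positivity)
  have hcoeff : 0 ≤ p * (p - 1) * (p - 2) :=
    mul_nonneg (mul_nonneg (by linarith) (by linarith)) (by linarith)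
  -- the two sides of the last condition below differ by exactly this quantity
  have hcoeff' : 0 ≤ p * (p - 2) ^ 2 * (p - 5 / 2) := by positivity
  have hconv : ConvexOn ℝ (Ioc 0 1) (legendreGap (1 * p) (4 * (p / 2)) (p - 1) (p / 2 - 1)) :=
    convexOn_legendreGap (by linarith) (by linarith) (by linarith) (by nlinarith)
  have hcrit : legendreGap (1 * p) (4 * (p / 2)) (p - 1) (p / 2 - 1) 1 = 0 := by
    have h2p' : (2 : ℝ) ^ (p - 1) = 3 := by
      rw [rpow_sub two_pos, h2p, rpow_one]; norm_num
    norm_num [legendreGap, h2p']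
    ring
  have hmin := min_le_of_convexOn_deriv hcont.continuousOn
    (fun y hy => hasDerivAt_legendreGap 1 4 p (p / 2) hy.1) hconv hcrit.le ht
  have h0 : legendreGap 1 4 p (p / 2) 0 = 1 := by
    simp [legendreGap, zero_rpow (by linarith : p ≠ 0), zero_rpow (by linarith : p / 2 ≠ 0)]
  have h1 : legendreGap 1 4 p (p / 2) 1 = 1 := by
    norm_num [legendreGap, h2p]
  rw [h0, h1, min_self, legendreGap] at hmin
  linarith

theorem rpow_add_four_mul_add_rpow_le_of_le {p a b : ℝ} (hp : 5 / 2 ≤ p) (hp3 : p ≤ 3)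
    (h2p : (2 : ℝ) ^ p = 6) (hb : 0 ≤ b) (hba : b ≤ a) :
    a ^ p + 4 * a ^ (p / 2) * b ^ (p / 2) + b ^ p ≤ (a + b) ^ p := by
  have ha : 0 ≤ a := hb.trans hba
  obtain ⟨t, ht, rfl⟩ : ∃ t ∈ Icc (0 : ℝ) 1, b = a * t := by
    rcases ha.eq_or_lt with rfl | ha
    · exact ⟨0, by simp, by linarith⟩
    · exact ⟨b / a, ⟨by positivity, (div_le_one ha).2 hba⟩, by field_simp⟩
  have hsq : a ^ (p / 2) * a ^ (p / 2) = a ^ p := by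
    rw [← rpow_add' ha (by linarith), add_halves]
  calc a ^ p + 4 * a ^ (p / 2) * (a * t) ^ (p / 2) + (a * t) ^ p
      = a ^ p * (1 + 4 * t ^ (p / 2) + t ^ p) := by
        rw [mul_rpow ha ht.1, mul_rpow ha ht.1, ← hsq]; ring
    _ ≤ a ^ p * (1 + t) ^ p :=
        mul_le_mul_of_nonneg_left (one_add_four_mul_rpow_half_add_rpow_le hp hp3 h2p ht)
          (rpow_nonneg ha p)
    _ = (a + a * t) ^ p := by rw [← mul_rpow ha (by linarith [ht.1]), mul_one_add]

theorem legendre_ineq_k2 (a b : ℝ) (ha : 0 ≤ a) (hb : 0 ≤ b) :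
    a ^ (Real.logb 2 6) + 4 * a ^ (Real.logb 2 6 / 2) * b ^ (Real.logb 2 6 / 2)
      + b ^ (Real.logb 2 6)
      ≤ (a + b) ^ (Real.logb 2 6) := by
  have h2p : (2 : ℝ) ^ logb 2 6 = 6 := rpow_logb two_pos (by norm_num) (by norm_num)
  have hp : 5 / 2 ≤ logb 2 6 := by
    rw [le_logb_iff_rpow_le one_lt_two (by norm_num)]
    have hsq : ((2 : ℝ) ^ (5 / 2 : ℝ)) ^ 2 = 32 := by
      rw [← rpow_natCast, ← rpow_mul two_pos.le]; norm_num
    nlinarith [rpow_pos_of_pos two_pos (5 / 2 : ℝ)]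
  have hp3 : logb 2 6 ≤ 3 := by
    rw [logb_le_iff_le_rpow one_lt_two (by norm_num)]
    norm_num
  rcases le_total b a with hba | hab
  · exact rpow_add_four_mul_add_rpow_le_of_le hp hp3 h2p hb hba
  · have := rpow_add_four_mul_add_rpow_le_of_le hp hp3 h2p ha hab
    rw [add_comm b a] at this
    linarith
end

section
/- For every integer $n \geq 0$, the additive energy of $\{0, 1, \dots, n\} \subseteq \mathbb{Z}$ equals $\frac{2(n+1)^3 + (n+1)}{3}$. -/
/-!
The energy of `A = {0, …, n}` is `∑ₛ r(s)²`, where `r(s)` counts the pairs `(a, b) ∈ A²` with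
`a + b = s`. For `s ≤ n` every splitting of `s` lies in `A²`, so `r(s) = s + 1`, and the involution
`(a, b) ↦ (n - a, n - b)` gives `r(2n - s) = r(s)`. Hence the energy is
`∑_{k ≤ n+1} k² + ∑_{k ≤ n} k²`.
-/

open Finset

open scoped Combinatorics.Additive Pointwise

def intervalSumRep (n s : ℕ) : ℕ :=
  #{p ∈ range (n + 1) ×ˢ range (n + 1) | p.1 + p.2 = s}

lemma intervalSumRep_of_le {n s : ℕ} (h : s ≤ n) : intervalSumRep n s = s + 1 := by
  rw [intervalSumRep, ← Nat.card_antidiagonal s]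
  congr 1
  ext ⟨a, b⟩
  simp only [mem_filter, mem_product, mem_range, HasAntidiagonal.mem_antidiagonal]
  omega

lemma intervalSumRep_two_mul_sub {n s : ℕ} (h : s ≤ 2 * n) :
    intervalSumRep n (2 * n - s) = intervalSumRep n s := by
  refine card_nbij' (fun p => (n - p.1, n - p.2)) (fun p => (n - p.1, n - p.2)) ?_ ?_ ?_ ?_ <;>
  · rintro ⟨a, b⟩
    simp only [coe_filter, mem_product, mem_range, Set.mem_ofPred_eq, Prod.mk.injEq]
    omega

lemma range_add_range (m n : ℕ) : range (m + 1) + range (n + 1) = range (m + n + 1) := by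
  ext s
  simp only [mem_add, mem_range]
  exact ⟨by rintro ⟨a, ha, b, hb, rfl⟩; omega,
    fun hs => ⟨min s m, by omega, s - min s m, by omega, by omega⟩⟩

lemma addEnergy_range_eq_sum_intervalSumRep_sq (n : ℕ) :
    E[range (n + 1)] = ∑ s ∈ range (2 * n + 1), intervalSumRep n s ^ 2 := by
  rw [addEnergy_eq_sum_sq', range_add_range, two_mul]
  rfl

lemma addEnergy_range_eq_sum_sq_add_sum_sq (n : ℕ) :
    E[range (n + 1)] = ∑ s ∈ range (n + 1), (s + 1) ^ 2 + ∑ s ∈ range n, (s + 1) ^ 2 := by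
  rw [addEnergy_range_eq_sum_intervalSumRep_sq, show 2 * n + 1 = (n + 1) + n by ring,
    sum_range_add]
  congr 1
  · refine sum_congr rfl fun s hs => ?_
    rw [intervalSumRep_of_le (Nat.lt_succ_iff.mp (mem_range.mp hs))]
  · rw [← sum_range_reflect]
    refine sum_congr rfl fun s hs => ?_
    have hs : s < n := mem_range.mp hs
    rw [← intervalSumRep_two_mul_sub (by omega), intervalSumRep_of_le (by omega),
      show 2 * n - (n + 1 + (n - 1 - s)) = s by omega]

lemma six_mul_sum_range_succ_sq (m : ℕ) :
    6 * ∑ s ∈ range m, (s + 1) ^ 2 = m * (m + 1) * (2 * m + 1) := by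
  induction m with
  | zero => rfl
  | succ k ih =>
    rw [sum_range_succ, mul_add, ih]
    ring

lemma three_mul_addEnergy_range (n : ℕ) :
    3 * E[range (n + 1)] = 2 * (n + 1) ^ 3 + (n + 1) := by
  have h₁ := six_mul_sum_range_succ_sq (n + 1)
  have h₂ := six_mul_sum_range_succ_sq n
  rw [addEnergy_range_eq_sum_sq_add_sum_sq]
  linarith

theorem energy_interval (n : ℕ) :
    ((((range (n + 1) ×ˢ range (n + 1)) ×ˢ (range (n + 1) ×ˢ range (n + 1))).filter
        (fun p => p.1.1 + p.1.2 = p.2.1 + p.2.2)).card : ℚ)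
      = (2 * (n + 1) ^ 3 + (n + 1)) / 3 := by
  rw [← addEnergy_eq_card_filter, eq_div_iff three_ne_zero, mul_comm]
  exact_mod_cast three_mul_addEnergy_range n
end
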